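/- arXiv:1510.06395 — 3 statements merged into one kernel-verified Lean document; each statement's English description precedes it below -/
import Mathlib

section
/- Let α > 0, a > 0, b > 0, β > 0 and 0 < q < 1. Then x_q = (-a + √(a² + 2 b · log(1 + (1/α) · log(1/(1 - q^{1/β}))))) / b is positive and satisfies F(x_q) = q, where F is the OGE-LFR cumulative distribution function; moreover x_q is the unique positive solution of F(x) = q. -/
/-- The OGE-LFR cumulative distribution function. -/
noncomputable def ogeLfrCdf (α a b β x : ℝ) : ℝ :=
  (1 - Real.exp (-α * (Real.exp (a * x + b / 2 * x ^ 2) - 1))) ^ β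

set_option maxHeartbeats 2000000 in
/-- For 0 < q < 1, the quantile
`x_q = (-a + √(a² + 2b·log(1 + (1/α)·log(1/(1 - q^{1/β})))))/b` is positive,
satisfies `F(x_q) = q`, and is the unique positive solution of `F(x) = q`. -/
theorem ogeLfrCdf_quantile (α a b β q : ℝ) (hα : 0 < α) (ha : 0 < a) (hb : 0 < b)
    (hβ : 0 < β) (hq0 : 0 < q) (hq1 : q < 1) (xq : ℝ)
    (hxq : xq = (-a + Real.sqrt (a ^ 2 +
      2 * b * Real.log (1 + (1 / α) * Real.log (1 / (1 - q ^ (1 / β)))))) / b) :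
    0 < xq ∧ ogeLfrCdf α a b β xq = q ∧
      ∀ x : ℝ, 0 < x → ogeLfrCdf α a b β x = q → x = xq := by
  have hβ' : (0:ℝ) < 1 / β := by positivity
  set t := q ^ (1 / β) with htdef
  have ht0 : 0 < t := Real.rpow_pos_of_pos hq0 _
  have ht1 : t < 1 := Real.rpow_lt_one hq0.le hq1 hβ'
  have h1t : 0 < 1 - t := by linarith
  set L := Real.log (1 / (1 - t)) with hLdef
  have hLpos : 0 < L := by
    apply Real.log_pos
    rw [lt_div_iff₀ h1t]; linarith
  set c := 1 + 1 / α * L with hcdef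
  have hc1 : 1 < c := by
    have h : 0 < 1 / α * L := by positivity
    rw [hcdef]; linarith
  have hc0 : 0 < c := by linarith
  set D := Real.log c with hDdef
  have hD0 : 0 < D := Real.log_pos hc1
  clear_value t L c D
  set s := Real.sqrt (a ^ 2 + 2 * b * D) with hsdef
  clear_value s
  have hs2 : s ^ 2 = a ^ 2 + 2 * b * D := by rw [hsdef]; exact Real.sq_sqrt (by positivity)
  have hsnn : 0 ≤ s := hsdef ▸ Real.sqrt_nonneg _
  have hsa : a < s := by nlinarith
  have hxq0 : 0 < xq := by
    rw [hxq]; apply div_pos (by linarith) hb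
  have htβ : t ^ β = q := by
    rw [htdef, ← Real.rpow_mul hq0.le, one_div, inv_mul_cancel₀ hβ.ne', Real.rpow_one]
  have hel : Real.exp (-L) = 1 - t := by
    rw [hLdef, one_div, Real.log_inv, neg_neg, Real.exp_log h1t]
  have key : ∀ x : ℝ, a * x + b / 2 * x ^ 2 = D → ogeLfrCdf α a b β x = q := by
    intro x hx
    unfold ogeLfrCdf
    rw [hx, hDdef, Real.exp_log hc0, show -α * (c - 1) = -L by
      rw [hcdef]; field_simp; ring, hel, show (1:ℝ) - (1 - t) = t by ring, htβ]
  have hquad : a * xq + b / 2 * xq ^ 2 = D := by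
    rw [hxq]
    field_simp
    nlinarith [hs2]
  refine ⟨hxq0, key xq hquad, ?_⟩
  intro x hx0 hFx
  -- derive a*x + b/2*x^2 = D
  have hg0 : 0 < a * x + b / 2 * x ^ 2 := by nlinarith
  set g := a * x + b / 2 * x ^ 2 with hgdef
  clear_value g
  have heg : 1 < Real.exp g := by
    calc (1:ℝ) = Real.exp 0 := Real.exp_zero.symm
    _ < Real.exp g := Real.exp_lt_exp.mpr hg0
  unfold ogeLfrCdf at hFx
  rw [← hgdef] at hFx
  set u := 1 - Real.exp (-α * (Real.exp g - 1)) with hudef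
  clear_value u
  have hu0 : 0 < u := by
    have h : Real.exp (-α * (Real.exp g - 1)) < 1 := by
      rw [Real.exp_lt_one_iff]
      nlinarith
    rw [hudef]; linarith
  have huβ : u ^ β = q := hFx
  have hut : u = t := by
    have h1 : (u ^ β) ^ (1 / β) = q ^ (1 / β) := by rw [huβ]
    rw [← Real.rpow_mul hu0.le, mul_one_div, div_self hβ.ne', Real.rpow_one] at h1
    rw [h1, htdef]
  have hexp : Real.exp (-α * (Real.exp g - 1)) = Real.exp (-L) := by
    rw [hel]
    have h : u = 1 - Real.exp (-α * (Real.exp g - 1)) := hudef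
    linarith [hut, h]
  have h2 : -α * (Real.exp g - 1) = -L := Real.exp_injective hexp
  have h3 : Real.exp g = c := by
    rw [hcdef]; field_simp at h2 ⊢; linarith
  have h4 : g = D := by
    rw [hDdef, ← h3, Real.log_exp]
  have hfac : (x - xq) * (b / 2 * (x + xq) + a) = 0 := by
    have : a * x + b / 2 * x ^ 2 = a * xq + b / 2 * xq ^ 2 := by
      rw [← hgdef, h4, hquad]
    nlinarith [this]
  rcases mul_eq_zero.mp hfac with h | h
  · linarith
  · nlinarith
end

section
/- Let α > 0, a > 0, b > 0, β > 0. The median of the OGE-LFR distribution, i.e., the unique positive number m with F(m) = 1/2, is given by m = (-a + √(a² + 2 b · log(1 + (1/α) · log(1/(1 - (1/2)^{1/β}))))) / b. -/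
set_option maxHeartbeats 1000000 in
/-- The median of the OGE-LFR distribution, i.e. the unique positive
number `m` with `F(m) = 1/2`, is
`m = (-a + √(a² + 2b·log(1 + (1/α)·log(1/(1 - (1/2)^{1/β})))))/b`. -/
theorem ogeLfrCdf_median (α a b β : ℝ) (hα : 0 < α) (ha : 0 < a) (hb : 0 < b)
    (hβ : 0 < β) (m : ℝ)
    (hm : m = (-a + Real.sqrt (a ^ 2 +
      2 * b * Real.log (1 + (1 / α) * Real.log (1 / (1 - (1 / 2 : ℝ) ^ (1 / β)))))) / b) :
    0 < m ∧ ogeLfrCdf α a b β m = 1 / 2 ∧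
      ∀ x : ℝ, 0 < x → ogeLfrCdf α a b β x = 1 / 2 → x = m := by
  set c : ℝ := (1 / 2 : ℝ) ^ (1 / β) with hc
  have hc0 : 0 < c := Real.rpow_pos_of_pos (by norm_num) _
  have hc1 : c < 1 := Real.rpow_lt_one (by norm_num) (by norm_num) (by positivity)
  have h1c : 0 < 1 - c := by linarith
  set L : ℝ := Real.log (1 / (1 - c)) with hL
  have hL0 : 0 < L := Real.log_pos (by rw [lt_div_iff₀ h1c]; linarith)
  have hexpL : Real.exp L = 1 / (1 - c) := Real.exp_log (by positivity)
  have hexpnL : Real.exp (-L) = 1 - c := by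
    rw [Real.exp_neg, hexpL]; field_simp
  set t : ℝ := Real.log (1 + (1 / α) * L) with ht
  have hpos : (0 : ℝ) < 1 + (1 / α) * L := by positivity
  have ht0 : 0 < t := Real.log_pos (by nlinarith [mul_pos (one_div_pos.mpr hα) hL0])
  have hexpt : Real.exp t = 1 + (1 / α) * L := Real.exp_log hpos
  set s : ℝ := Real.sqrt (a ^ 2 + 2 * b * t) with hs
  have hs2 : s ^ 2 = a ^ 2 + 2 * b * t := Real.sq_sqrt (by positivity)
  have hsa : a < s := by
    nlinarith [Real.sqrt_nonneg (a ^ 2 + 2 * b * t), mul_pos hb ht0]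
  have hm0 : 0 < m := by rw [hm]; apply div_pos (by linarith) hb
  have hbm : b * m = s - a := by rw [hm]; field_simp; ring
  have hgm : a * m + b / 2 * m ^ 2 = t := by
    have h2 : 2 * b * (a * m + b / 2 * m ^ 2) = 2 * a * (b * m) + (b * m) ^ 2 := by ring
    rw [hbm] at h2
    nlinarith [h2, hs2]
  -- key: value of CDF at any point where the exponent equals t is 1/2
  have cbeta : c ^ β = (1 / 2 : ℝ) := by
    rw [hc, ← Real.rpow_mul (by norm_num : (0:ℝ) ≤ 1/2),
      show (1 / β) * β = 1 by field_simp, Real.rpow_one]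
  have hval : ∀ x : ℝ, a * x + b / 2 * x ^ 2 = t → ogeLfrCdf α a b β x = 1 / 2 := by
    intro x hx
    unfold ogeLfrCdf
    rw [hx, hexpt]
    have h2 : -α * (1 + 1 / α * L - 1) = -L := by field_simp; ring
    rw [h2, hexpnL, show (1:ℝ) - (1 - c) = c by ring]
    exact cbeta
  refine ⟨hm0, hval m hgm, ?_⟩
  intro x hx0 hx
  -- derive a * x + b / 2 * x ^ 2 = t
  have hg0 : 0 < a * x + b / 2 * x ^ 2 := by positivity
  have hE1 : Real.exp (a * x + b / 2 * x ^ 2) > 1 := by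
    linarith [Real.add_one_le_exp (a * x + b / 2 * x ^ 2)]
  have hEneg : -α * (Real.exp (a * x + b / 2 * x ^ 2) - 1) < 0 := by nlinarith
  have hB1 : Real.exp (-α * (Real.exp (a * x + b / 2 * x ^ 2) - 1)) < 1 := by
    simpa using Real.exp_lt_exp.mpr hEneg
  have hB0 : 0 < 1 - Real.exp (-α * (Real.exp (a * x + b / 2 * x ^ 2) - 1)) := by linarith
  unfold ogeLfrCdf at hx
  have hBc : 1 - Real.exp (-α * (Real.exp (a * x + b / 2 * x ^ 2) - 1)) = c := by
    have h1 : ((1 - Real.exp (-α * (Real.exp (a * x + b / 2 * x ^ 2) - 1))) ^ β) ^ (β⁻¹ : ℝ)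
        = 1 - Real.exp (-α * (Real.exp (a * x + b / 2 * x ^ 2) - 1)) :=
      Real.rpow_rpow_inv hB0.le hβ.ne'
    rw [hx] at h1
    rw [← h1, hc]
    norm_num
  have hEeq : Real.exp (-α * (Real.exp (a * x + b / 2 * x ^ 2) - 1)) = Real.exp (-L) := by
    rw [hexpnL]; linarith only [hBc]
  have h1 : -α * (Real.exp (a * x + b / 2 * x ^ 2) - 1) = -L := Real.exp_injective hEeq
  have h2 : Real.exp (a * x + b / 2 * x ^ 2) = Real.exp t := by
    rw [hexpt]
    have hα' : α ≠ 0 := hα.ne'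
    have h3 : α * (Real.exp (a * x + b / 2 * x ^ 2) - 1) = L := by
      linarith only [h1]
    have h4 : Real.exp (a * x + b / 2 * x ^ 2) - 1 = 1 / α * L := by
      rw [one_div, inv_mul_eq_div, eq_div_iff hα']
      linarith only [h3]
    linarith only [h4]
  have hgx : a * x + b / 2 * x ^ 2 = t := Real.exp_injective h2
  have hfac : (x - m) * (b / 2 * (x + m) + a) = 0 := by linear_combination hgx - hgm
  have hpos2 : 0 < b / 2 * (x + m) + a := by positivity
  have := mul_eq_zero.mp hfac
  rcases this with h | h
  · linarith
  · linarith
end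

section
/- Let α > 0, a > 0, b > 0, β > 0, let n be a positive integer and 1 ≤ r ≤ n. Define f_{r:n}(x) = (1/B(r, n - r + 1)) · F(x; β)^{r-1} · (1 - F(x; β))^{n-r} · f(x; β), where B is the beta function and F(·; β), f(·; β) are the OGE-LFR cumulative distribution and density functions with shape parameter β. Then for every x > 0, f_{r:n}(x) = Σ_{i=0}^{n-r} (-1)^i · n! / (i! (r-1)! (n-r-i)! (r+i)) · f(x; (r+i) β), i.e., the density of the r-th order statistic is a finite signed combination of OGE-LFR densities with shape parameters (r+i)β. -/
/-- The OGE-LFR probability density function. -/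
noncomputable def ogeLfrPdf (α a b β x : ℝ) : ℝ :=
  α * β * (a + b * x) * Real.exp (a * x + b / 2 * x ^ 2) *
    Real.exp (-α * (Real.exp (a * x + b / 2 * x ^ 2) - 1)) *
    (1 - Real.exp (-α * (Real.exp (a * x + b / 2 * x ^ 2) - 1))) ^ (β - 1)

lemma one_sub_pow'' (z : ℝ) (N : ℕ) :
    (1 - z) ^ N = ∑ i ∈ Finset.range (N + 1), (-1 : ℝ) ^ i * N.choose i * z ^ i := by
  rw [sub_eq_add_neg, add_comm, add_pow]
  refine Finset.sum_congr rfl fun i hi => ?_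
  rw [neg_pow]; ring

/-- The density of the r-th order statistic from a sample of size n,
`f_{r:n}(x) = (1/B(r, n-r+1)) F(x)^{r-1} (1-F(x))^{n-r} f(x)` (with `B` the beta
function `B(p,q) = Γ(p)Γ(q)/Γ(p+q)`), is a finite signed combination of OGE-LFR
densities with shape parameters `(r+i)β`. -/
theorem ogeLfr_orderStat_density (α a b β : ℝ) (hα : 0 < α) (ha : 0 < a)
    (hb : 0 < b) (hβ : 0 < β) (n r : ℕ) (hr1 : 1 ≤ r) (hrn : r ≤ n)
    (x : ℝ) (hx : 0 < x) :
    (1 / (Real.Gamma (r : ℝ) * Real.Gamma ((n : ℝ) - (r : ℝ) + 1) /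
        Real.Gamma ((n : ℝ) + 1))) *
      ogeLfrCdf α a b β x ^ (r - 1) * (1 - ogeLfrCdf α a b β x) ^ (n - r) *
      ogeLfrPdf α a b β x =
    ∑ i ∈ Finset.range (n - r + 1),
      (-1 : ℝ) ^ i * (Nat.factorial n : ℝ) /
        ((Nat.factorial i : ℝ) * (Nat.factorial (r - 1) : ℝ) *
          (Nat.factorial (n - r - i) : ℝ) * ((r : ℝ) + (i : ℝ))) *
        ogeLfrPdf α a b (((r : ℝ) + (i : ℝ)) * β) x := by
  have hy : 0 < a * x + b / 2 * x ^ 2 := by positivity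
  set y := a * x + b / 2 * x ^ 2 with hydef
  have hE1 : 1 < Real.exp y := Real.one_lt_exp_iff.mpr hy
  have hTlt : Real.exp (-α * (Real.exp y - 1)) < 1 :=
    Real.exp_lt_one_iff.mpr (by nlinarith)
  set T := Real.exp (-α * (Real.exp y - 1)) with hTdef
  have hTpos : 0 < T := Real.exp_pos _
  set u := 1 - T with hudef
  have hu : 0 < u := by simp only [hudef]; linarith
  -- cast facts
  have hrc : ((r - 1 : ℕ) : ℝ) = (r : ℝ) - 1 := by
    rw [Nat.cast_sub hr1]; norm_num
  have hnrc : ((n - r : ℕ) : ℝ) = (n : ℝ) - (r : ℝ) := by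
    rw [Nat.cast_sub hrn]
  -- Gamma values
  have hΓr : Real.Gamma (r : ℝ) = (Nat.factorial (r - 1) : ℝ) := by
    rw [show (r : ℝ) = ((r - 1 : ℕ) : ℝ) + 1 by rw [hrc]; ring,
      Real.Gamma_nat_eq_factorial]
  have hΓnr : Real.Gamma ((n : ℝ) - (r : ℝ) + 1) = (Nat.factorial (n - r) : ℝ) := by
    rw [← hnrc, Real.Gamma_nat_eq_factorial]
  have hΓn : Real.Gamma ((n : ℝ) + 1) = (Nat.factorial n : ℝ) := by
    rw [show ((n : ℝ) + 1) = ((n : ℕ) : ℝ) + 1 by norm_num, Real.Gamma_nat_eq_factorial]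
  simp only [ogeLfrCdf, ogeLfrPdf, ← hydef, ← hTdef, ← hudef, hΓr, hΓnr, hΓn]
  rw [one_sub_pow'' (u ^ β) (n - r), Finset.mul_sum, Finset.sum_mul]
  refine Finset.sum_congr rfl fun i hi => ?_
  have hi' : i ≤ n - r := by
    simpa [Nat.lt_succ_iff] using Finset.mem_range.mp hi
  have hchoose : ((n - r).choose i : ℝ) =
      (Nat.factorial (n - r) : ℝ) / ((Nat.factorial i : ℝ) * (Nat.factorial (n - r - i) : ℝ)) :=
    Nat.cast_choose ℝ hi'
  -- rpow manipulations
  have h1 : (u ^ β) ^ (r - 1) = u ^ (β * ((r : ℝ) - 1)) := by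
    rw [← Real.rpow_natCast (u ^ β) (r - 1), ← Real.rpow_mul hu.le, hrc]
  have h2 : (u ^ β) ^ i = u ^ (β * (i : ℝ)) := by
    rw [← Real.rpow_natCast (u ^ β) i, ← Real.rpow_mul hu.le]
  have h3 : u ^ (β * ((r : ℝ) - 1)) * u ^ (β * (i : ℝ)) * u ^ (β - 1)
      = u ^ (((r : ℝ) + (i : ℝ)) * β - 1) := by
    rw [← Real.rpow_add hu, ← Real.rpow_add hu]; ring_nf
  have hfr : (0 : ℝ) < (Nat.factorial (r - 1) : ℝ) := by positivity
  have hfnr : (0 : ℝ) < (Nat.factorial (n - r) : ℝ) := by positivity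
  have hfi : (0 : ℝ) < (Nat.factorial i : ℝ) := by positivity
  have hfnri : (0 : ℝ) < (Nat.factorial (n - r - i) : ℝ) := by positivity
  have hri : (0 : ℝ) < (r : ℝ) + (i : ℝ) := by
    have : (1 : ℝ) ≤ (r : ℝ) := by exact_mod_cast hr1
    positivity
  rw [h1, h2, hchoose]
  rw [show (1 / ((Nat.factorial (r-1) : ℝ) * (Nat.factorial (n-r) : ℝ) / (Nat.factorial n : ℝ))) *
        u ^ (β * ((r : ℝ) - 1)) *
        ((-1 : ℝ) ^ i * ((Nat.factorial (n-r) : ℝ) / ((Nat.factorial i : ℝ) * (Nat.factorial (n-r-i) : ℝ))) * u ^ (β * (i : ℝ))) *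
        (α * β * (a + b * x) * Real.exp y * T * u ^ (β - 1))
      = ((1 / ((Nat.factorial (r-1) : ℝ) * (Nat.factorial (n-r) : ℝ) / (Nat.factorial n : ℝ))) *
          ((-1 : ℝ) ^ i * ((Nat.factorial (n-r) : ℝ) / ((Nat.factorial i : ℝ) * (Nat.factorial (n-r-i) : ℝ)))) *
          (α * β * (a + b * x) * Real.exp y * T)) *
        (u ^ (β * ((r : ℝ) - 1)) * u ^ (β * (i : ℝ)) * u ^ (β - 1)) from by ring, h3]
  rw [show ((-1 : ℝ) ^ i * (Nat.factorial n : ℝ) /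
        ((Nat.factorial i : ℝ) * (Nat.factorial (r-1) : ℝ) * (Nat.factorial (n-r-i) : ℝ) * ((r : ℝ) + (i : ℝ)))) *
        (α * (((r : ℝ) + (i : ℝ)) * β) * (a + b * x) * Real.exp y * T * u ^ (((r : ℝ) + (i : ℝ)) * β - 1))
      = (((-1 : ℝ) ^ i * (Nat.factorial n : ℝ) /
          ((Nat.factorial i : ℝ) * (Nat.factorial (r-1) : ℝ) * (Nat.factorial (n-r-i) : ℝ) * ((r : ℝ) + (i : ℝ)))) *
          (α * (((r : ℝ) + (i : ℝ)) * β) * (a + b * x) * Real.exp y * T)) *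
        u ^ (((r : ℝ) + (i : ℝ)) * β - 1) from by ring]
  congr 1
  field_simp
end
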